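/- Let q: ℝ → ℝ be C¹ with q̇ satisfying q̇(ξ,t) = ½∫_ℝ e^{−|q(ξ,t)−q(η,t)|} p(η,t)dη and p satisfying ṗ(ξ,t) = ½ p(ξ,t)∫_ℝ sgn(ξ−η) e^{−|q(ξ,t)−q(η,t)|} p(η,t)dη, with p(·,t) > 0 and q(·,t) strictly increasing. Then K(ξ,η;t) = ½ e^{−|q(ξ,t)−q(η,t)|/2} √(p(ξ,t)p(η,t)) satisfies the integro-differential equation K̇(ξ,η;t) = ∫_{−∞}^{ξ} K(ξ,ζ;t)K(ζ,η;t)dζ − ∫_{η}^{∞} K(ξ,ζ;t)K(ζ,η;t)dζ (pointwise, for ξ ≤ η). -/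

import Mathlib

open MeasureTheory

noncomputable section

/-- The kernel `K(ξ,η;t) = ½ e^{−|q(ξ,t)−q(η,t)|/2} √(p(ξ,t)p(η,t))`. -/
def chLagKer (q p : ℝ → ℝ → ℝ) (ξ η t : ℝ) : ℝ :=
  (1 / 2) * Real.exp (-|q ξ t - q η t| / 2) * Real.sqrt (p ξ t * p η t)

open Set

/-!
For `ξ ≤ η` the kernel is `½ e^{(q ξ - q η)/2} √(p ξ p η)`, with logarithmic derivative
`(q̇ ξ - q̇ η)/2 + ṗ ξ/(2 p ξ) + ṗ η/(2 p η)`. Let `A, A'` be the integrals of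
`e^{-|q ξ - q ζ|} p ζ` over `ζ ≤ ξ` and `ζ > ξ`, and `C, B` those of `e^{-|q η - q ζ|} p ζ`
over `ζ ≤ η` and `ζ > η`.
The equations of motion turn the logarithmic derivative into
`(A + A' - C - B)/4 + (A - A' + C - B)/4 = (A - B)/2`.
For `ζ` outside `[ξ, η]` the exponents combine to `K(ξ,ζ) K(ζ,η) = ½ K(ξ,η) e^{-|q m - q ζ|} p ζ`,
`m` being the endpoint nearest to `ζ`, so the two integrals are `½ K(ξ,η) A` and `½ K(ξ,η) B`.
-/

theorem integral_sign_sub_mul {μ : Measure ℝ} [NullSingletonClass μ] {f : ℝ → ℝ}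
    (hf : Integrable f μ) (a : ℝ) :
    ∫ x, Real.sign (a - x) * f x ∂μ = (∫ x in Iic a, f x ∂μ) - ∫ x in Ioi a, f x ∂μ := by
  have hleft : EqOn (fun x => Real.sign (a - x) * f x) f (Iio a) := fun x hx => by
    simp [Real.sign_of_pos (sub_pos.2 hx)]
  have hright : EqOn (fun x => Real.sign (a - x) * f x) (-f) (Ioi a) := fun x hx => by
    simp [Real.sign_of_neg (sub_neg.2 hx)]
  have hint_left : IntegrableOn (fun x => Real.sign (a - x) * f x) (Iic a) μ :=
    (integrableOn_Iic_iff_integrableOn_Iio).2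
      (hf.integrableOn.congr_fun hleft.symm measurableSet_Iio)
  rw [← intervalIntegral.integral_Iic_add_Ioi hint_left
      (hf.neg.integrableOn.congr_fun hright.symm measurableSet_Ioi),
    integral_Iic_eq_integral_Iio, integral_Iic_eq_integral_Iio (f := f),
    setIntegral_congr_fun measurableSet_Iio hleft, setIntegral_congr_fun measurableSet_Ioi hright,
    Pi.neg_def, integral_neg, sub_eq_add_neg]

theorem exp_neg_abs_half_mul_of_le_of_le {a b c : ℝ} (hca : c ≤ a) (hab : a ≤ b) :
    Real.exp (-|a - c| / 2) * Real.exp (-|c - b| / 2) =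
      Real.exp (-|a - b| / 2) * Real.exp (-|a - c|) := by
  rw [abs_of_nonneg (sub_nonneg.2 hca), abs_of_nonpos (sub_nonpos.2 (hca.trans hab)),
    abs_of_nonpos (sub_nonpos.2 hab), ← Real.exp_add, ← Real.exp_add]
  ring_nf

theorem exp_neg_abs_half_mul_of_le_of_le' {a b c : ℝ} (hab : a ≤ b) (hbc : b ≤ c) :
    Real.exp (-|a - c| / 2) * Real.exp (-|c - b| / 2) =
      Real.exp (-|a - b| / 2) * Real.exp (-|b - c|) := by
  rw [abs_of_nonpos (sub_nonpos.2 (hab.trans hbc)), abs_of_nonneg (sub_nonneg.2 hbc),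
    abs_of_nonpos (sub_nonpos.2 hab), abs_of_nonpos (sub_nonpos.2 hbc), ← Real.exp_add,
    ← Real.exp_add]
  ring_nf

theorem sqrt_mul_mul_sqrt_mul {x y z : ℝ} (hx : 0 ≤ x) (hz : 0 ≤ z) :
    Real.sqrt (x * z) * Real.sqrt (z * y) = z * Real.sqrt (x * y) := by
  rw [← Real.sqrt_mul (mul_nonneg hx hz), show x * z * (z * y) = z ^ 2 * (x * y) by ring,
    Real.sqrt_mul (sq_nonneg z), Real.sqrt_sq hz]

theorem chLagKer_mul_chLagKer {q p : ℝ → ℝ → ℝ} {ξ η ζ t E : ℝ}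
    (hexp : Real.exp (-|q ξ t - q ζ t| / 2) * Real.exp (-|q ζ t - q η t| / 2) =
      Real.exp (-|q ξ t - q η t| / 2) * E)
    (hξ : 0 ≤ p ξ t) (hζ : 0 ≤ p ζ t) :
    chLagKer q p ξ ζ t * chLagKer q p ζ η t = 1 / 2 * chLagKer q p ξ η t * (E * p ζ t) := by
  unfold chLagKer
  linear_combination (1 / 4 * Real.sqrt (p ξ t * p ζ t) * Real.sqrt (p ζ t * p η t)) * hexp +
    (1 / 4 * Real.exp (-|q ξ t - q η t| / 2) * E) * sqrt_mul_mul_sqrt_mul (y := p η t) hξ hζ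

theorem chLagKer_of_le {q p : ℝ → ℝ → ℝ} {ξ η s : ℝ} (h : q ξ s ≤ q η s) :
    chLagKer q p ξ η s = 1 / 2 * Real.exp ((q ξ s - q η s) / 2) * Real.sqrt (p ξ s * p η s) := by
  rw [chLagKer, abs_of_nonpos (sub_nonpos.2 h), neg_neg]

theorem HasDerivAt.sqrt_mul_of_logDeriv {u v : ℝ → ℝ} {α β t : ℝ}
    (hu : HasDerivAt u (u t * α) t) (hv : HasDerivAt v (v t * β) t) (hu0 : 0 < u t)
    (hv0 : 0 < v t) :
    HasDerivAt (fun s => Real.sqrt (u s * v s)) (Real.sqrt (u t * v t) * ((α + β) / 2)) t := by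
  have hsq := Real.sq_sqrt (mul_pos hu0 hv0).le
  refine ((hu.mul hv).sqrt (mul_pos hu0 hv0).ne').congr_deriv ?_
  rw [Pi.mul_apply]
  field_simp
  linear_combination -(α + β) * hsq

theorem hasDerivAt_half_exp_mul_sqrt {f g u v : ℝ → ℝ} {f' g' α β t : ℝ}
    (hf : HasDerivAt f f' t) (hg : HasDerivAt g g' t) (hu : HasDerivAt u (u t * α) t)
    (hv : HasDerivAt v (v t * β) t) (hu0 : 0 < u t) (hv0 : 0 < v t) :
    HasDerivAt (fun s => 1 / 2 * Real.exp ((f s - g s) / 2) * Real.sqrt (u s * v s))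
      (1 / 2 * Real.exp ((f t - g t) / 2) * Real.sqrt (u t * v t) * ((f' - g' + α + β) / 2))
      t :=
  ((((hf.sub hg).div_const 2).exp.const_mul (1 / 2)).mul
    (hu.sqrt_mul_of_logDeriv hv hu0 hv0)).congr_deriv (by rw [Pi.sub_apply]; ring)

/-- if `q`, `p` evolve by the Lagrangian Camassa-Holm (characteristic)
equations, then `K(ξ,η;t) = ½ e^{−|qξ−qη|/2} √(pξ pη)` satisfies
`K̇ = ∫_{−∞}^{ξ} K(ξ,ζ)K(ζ,η)dζ − ∫_{η}^{∞} K(ξ,ζ)K(ζ,η)dζ` for `ξ ≤ η`. -/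
theorem camassaHolm_kernel_evolution
    (q p : ℝ → ℝ → ℝ)
    (hppos : ∀ ξ t : ℝ, 0 < p ξ t)
    (hmono : ∀ t : ℝ, StrictMono fun ξ => q ξ t)
    (hint : ∀ ξ t : ℝ,
      Integrable (fun η => Real.exp (-|q ξ t - q η t|) * p η t) (volume : Measure ℝ))
    (hq : ∀ ξ t : ℝ, HasDerivAt (fun s => q ξ s)
      ((1 / 2) * ∫ η : ℝ, Real.exp (-|q ξ t - q η t|) * p η t) t)
    (hp : ∀ ξ t : ℝ, HasDerivAt (fun s => p ξ s)
      ((1 / 2) * p ξ t *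
        ∫ η : ℝ, Real.sign (ξ - η) * Real.exp (-|q ξ t - q η t|) * p η t) t) :
    ∀ ξ η t : ℝ, ξ ≤ η →
      HasDerivAt (fun s => chLagKer q p ξ η s)
        ((∫ ζ in Set.Iic ξ, chLagKer q p ξ ζ t * chLagKer q p ζ η t) -
          ∫ ζ in Set.Ioi η, chLagKer q p ξ ζ t * chLagKer q p ζ η t) t := by
  intro ξ η t hξη
  have hle : ∀ {a b : ℝ} (s : ℝ), a ≤ b → q a s ≤ q b s := fun s h => (hmono s).monotone h
  have hsplit : ∀ x, ∫ ζ, Real.exp (-|q x t - q ζ t|) * p ζ t =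
      (∫ ζ in Iic x, Real.exp (-|q x t - q ζ t|) * p ζ t) +
        ∫ ζ in Ioi x, Real.exp (-|q x t - q ζ t|) * p ζ t := fun x =>
    (intervalIntegral.integral_Iic_add_Ioi (hint x t).integrableOn (hint x t).integrableOn).symm
  have hsign : ∀ x, ∫ ζ, Real.sign (x - ζ) * Real.exp (-|q x t - q ζ t|) * p ζ t =
      (∫ ζ in Iic x, Real.exp (-|q x t - q ζ t|) * p ζ t) -
        ∫ ζ in Ioi x, Real.exp (-|q x t - q ζ t|) * p ζ t := fun x => by
    simp only [mul_assoc]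
    exact integral_sign_sub_mul (hint x t) x
  have hleft : ∫ ζ in Iic ξ, chLagKer q p ξ ζ t * chLagKer q p ζ η t =
      1 / 2 * chLagKer q p ξ η t * ∫ ζ in Iic ξ, Real.exp (-|q ξ t - q ζ t|) * p ζ t := by
    rw [← integral_const_mul]
    exact setIntegral_congr_fun measurableSet_Iic fun ζ hζ => chLagKer_mul_chLagKer
      (exp_neg_abs_half_mul_of_le_of_le (hle t hζ) (hle t hξη)) (hppos ξ t).le (hppos ζ t).le
  have hright : ∫ ζ in Ioi η, chLagKer q p ξ ζ t * chLagKer q p ζ η t =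
      1 / 2 * chLagKer q p ξ η t * ∫ ζ in Ioi η, Real.exp (-|q η t - q ζ t|) * p ζ t := by
    rw [← integral_const_mul]
    exact setIntegral_congr_fun measurableSet_Ioi fun ζ hζ => chLagKer_mul_chLagKer
      (exp_neg_abs_half_mul_of_le_of_le' (hle t hξη) (hle t (le_of_lt hζ))) (hppos ξ t).le
      (hppos ζ t).le
  refine ((hasDerivAt_half_exp_mul_sqrt (hq ξ t) (hq η t)
    ((hp ξ t).congr_deriv (by rw [mul_comm (1 / 2), mul_assoc]))
    ((hp η t).congr_deriv (by rw [mul_comm (1 / 2), mul_assoc])) (hppos ξ t) (hppos η t)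
    ).congr_of_eventuallyEq (.of_forall fun s => chLagKer_of_le (hle s hξη))).congr_deriv ?_
  rw [hleft, hright, hsplit ξ, hsplit η, hsign ξ, hsign η, chLagKer_of_le (hle t hξη)]
  ring
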